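/- arXiv:1503.02179 — 3 statements merged into one kernel-verified Lean document; each statement's English description precedes it below -/
import Mathlib

section
/- Let n ≥ 2, R₀ > 0, and let F : B_{R₀} → ℝ be a convex continuously differentiable function on the open ball B_{R₀} ⊂ ℝ^{n-1} with F ≥ 0 and F(0) = 0. Define δ(r) = sup_{0<|x'|≤r} F(x')/|x'| and δ₁(r) = sup_{|x'|≤r} |∇F(x')| for 0 < r < R₀. Then δ₁(r) → 0 as r → 0⁺ if and only if δ(r) → 0 as r → 0⁺. -/
/-!
The mean value inequality and `F 0 = 0` give `F x ≤ δ₁(r) ‖x‖` on the closed `r`-ball, hence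
`0 ≤ δ(r) ≤ δ₁(r)`. Conversely, for `‖x‖ ≤ r` convexity and `F x ≥ 0` give
`F (x + r ∇F(x) / ‖∇F(x)‖) ≥ r ‖∇F(x)‖`, while the left side is at most `2 r δ(2r)`;
so `δ₁(r) ≤ 2 δ(2r)`.
-/

noncomputable section
open Metric Set Filter Topology

/-- `δ(r) = sup_{0<|x'|≤r} F(x')/|x'|`. -/
def deltaFn (m : ℕ) (F : EuclideanSpace ℝ (Fin m) → ℝ) (r : ℝ) : ℝ :=
  sSup ((fun x' => F x' / ‖x'‖) '' {x' : EuclideanSpace ℝ (Fin m) | 0 < ‖x'‖ ∧ ‖x'‖ ≤ r})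

/-- `δ₁(r) = sup_{|x'|≤r} |∇F(x')|`. -/
def deltaOneFn (m : ℕ) (F : EuclideanSpace ℝ (Fin m) → ℝ) (r : ℝ) : ℝ :=
  sSup ((fun x' => ‖gradient F x'‖) '' closedBall (0 : EuclideanSpace ℝ (Fin m)) r)

theorem ConvexOn.apply_sub_le_sub_of_hasFDerivAt {E : Type*} [NormedAddCommGroup E]
    [NormedSpace ℝ E] {s : Set E} {f : E → ℝ} {f' : E →L[ℝ] ℝ} {x y : E} (hf : ConvexOn ℝ s f)
    (hx : x ∈ s) (hy : y ∈ s) (hf' : HasFDerivAt f f' x) : f' (y - x) ≤ f y - f x := by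
  let ℓ : ℝ →ᵃ[ℝ] E := AffineMap.lineMap x y
  have hℓ : HasDerivAt (f ∘ ℓ) (f' (y - x)) 0 :=
    (AffineMap.lineMap_apply_zero (k := ℝ) x y ▸ hf').comp_hasDerivAt 0 AffineMap.hasDerivAt_lineMap
  simpa [slope, ℓ] using (hf.comp_affineMap ℓ).le_slope_of_hasDerivAt
    (by simpa [ℓ] using hx) (by simpa [ℓ] using hy) one_pos hℓ

section InnerProductSpace

open InnerProductSpace

variable {E : Type*} [NormedAddCommGroup E] [InnerProductSpace ℝ E] [CompleteSpace E]

theorem norm_gradient_eq_norm_fderiv (f : E → ℝ) (x : E) : ‖gradient f x‖ = ‖fderiv ℝ f x‖ :=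
  (toDual ℝ E).symm.norm_map _

theorem ConvexOn.exists_mem_closedBall_add_mul_norm_gradient_le {s : Set E} {f : E → ℝ} {x : E}
    {r : ℝ} (hf : ConvexOn ℝ s f) (hr : 0 ≤ r) (hs : closedBall x r ⊆ s)
    (hfx : DifferentiableAt ℝ f x) : ∃ y ∈ closedBall x r, f x + r * ‖gradient f x‖ ≤ f y := by
  set g := gradient f x
  obtain hg | hg := eq_or_ne g 0
  · exact ⟨x, mem_closedBall_self hr, by simp [hg]⟩
  have hgpos : 0 < ‖g‖ := norm_pos_iff.2 hg
  set y := x + (r / ‖g‖) • g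
  have hy : y ∈ closedBall x r := by
    rw [mem_closedBall, dist_self_add_left, norm_smul, Real.norm_eq_abs,
      abs_of_nonneg (div_nonneg hr hgpos.le), div_mul_cancel₀ _ hgpos.ne']
  have hgrad := hf.apply_sub_le_sub_of_hasFDerivAt (hs (mem_closedBall_self hr)) (hs hy)
    hfx.hasGradientAt
  rw [add_sub_cancel_left, toDual_apply_apply, real_inner_smul_right,
    real_inner_self_eq_norm_sq] at hgrad
  have hinner : r / ‖g‖ * ‖g‖ ^ 2 = r * ‖g‖ := by field_simp
  exact ⟨y, hy, by linarith⟩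

end InnerProductSpace

section Delta

variable {m : ℕ} {F : EuclideanSpace ℝ (Fin m) → ℝ} {r R₀ : ℝ}

theorem deltaOneFn_nonneg : 0 ≤ deltaOneFn m F r :=
  Real.sSup_nonneg <| by rintro _ ⟨x, -, rfl⟩; exact norm_nonneg _

theorem deltaFn_nonneg (hF : ∀ x ∈ closedBall 0 r, 0 ≤ F x) : 0 ≤ deltaFn m F r :=
  Real.sSup_nonneg <| by
    rintro _ ⟨x, ⟨-, hxr⟩, rfl⟩
    exact div_nonneg (hF x (mem_closedBall_zero_iff.2 hxr)) (norm_nonneg x)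

theorem norm_gradient_le_deltaOneFn (hF : ContDiffOn ℝ 1 F (ball 0 R₀)) (hr : r < R₀)
    {x : EuclideanSpace ℝ (Fin m)} (hx : x ∈ closedBall 0 r) :
    ‖gradient F x‖ ≤ deltaOneFn m F r := by
  have hcont : ContinuousOn (fun x => ‖gradient F x‖) (closedBall 0 r) := by
    simp only [norm_gradient_eq_norm_fderiv]
    exact ((hF.continuousOn_fderiv_of_isOpen isOpen_ball le_rfl).mono
      (closedBall_subset_ball hr)).norm
  exact le_csSup ((isCompact_closedBall 0 r).image_of_continuousOn hcont).bddAbove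
    (mem_image_of_mem _ hx)

theorem apply_le_deltaOneFn_mul_norm (hF : ContDiffOn ℝ 1 F (ball 0 R₀)) (hF0 : F 0 = 0)
    (hr : r < R₀) {x : EuclideanSpace ℝ (Fin m)} (hx : x ∈ closedBall 0 r) :
    F x ≤ deltaOneFn m F r * ‖x‖ := by
  have hdiff : ∀ z ∈ closedBall (0 : EuclideanSpace ℝ (Fin m)) r, DifferentiableAt ℝ F z :=
    fun z hz => (hF.differentiableOn one_ne_zero).differentiableAt
      (isOpen_ball.mem_nhds (closedBall_subset_ball hr hz))
  have hmv := (convex_closedBall 0 r).norm_image_sub_le_of_norm_fderiv_le hdiff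
    (fun z hz => norm_gradient_eq_norm_fderiv F z ▸ norm_gradient_le_deltaOneFn hF hr hz)
    (mem_closedBall_self (nonneg_of_mem_closedBall hx)) hx
  rw [hF0, sub_zero, sub_zero] at hmv
  exact (le_abs_self _).trans hmv

theorem deltaFn_le_deltaOneFn (hF : ContDiffOn ℝ 1 F (ball 0 R₀)) (hF0 : F 0 = 0)
    (hr : r < R₀) : deltaFn m F r ≤ deltaOneFn m F r :=
  Real.sSup_le (by
    rintro _ ⟨x, ⟨hx0, hxr⟩, rfl⟩
    exact (div_le_iff₀ hx0).2
      (apply_le_deltaOneFn_mul_norm hF hF0 hr (mem_closedBall_zero_iff.2 hxr)))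
    deltaOneFn_nonneg

theorem apply_le_deltaFn_mul_norm (hF : ContDiffOn ℝ 1 F (ball 0 R₀)) (hF0 : F 0 = 0)
    (hr : r < R₀) {x : EuclideanSpace ℝ (Fin m)} (hx : x ∈ closedBall 0 r) :
    F x ≤ deltaFn m F r * ‖x‖ := by
  obtain rfl | hx0 := eq_or_ne x 0
  · simp [hF0]
  have hbdd : BddAbove ((fun x' => F x' / ‖x'‖) ''
      {x' : EuclideanSpace ℝ (Fin m) | 0 < ‖x'‖ ∧ ‖x'‖ ≤ r}) := by
    refine ⟨deltaOneFn m F r, ?_⟩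
    rintro _ ⟨y, ⟨hy0, hyr⟩, rfl⟩
    exact (div_le_iff₀ hy0).2
      (apply_le_deltaOneFn_mul_norm hF hF0 hr (mem_closedBall_zero_iff.2 hyr))
  have hxpos : 0 < ‖x‖ := norm_pos_iff.2 hx0
  exact (div_le_iff₀ hxpos).1
    (le_csSup hbdd ⟨x, ⟨hxpos, mem_closedBall_zero_iff.1 hx⟩, rfl⟩)

theorem deltaOneFn_le_two_mul_deltaFn (hFconv : ConvexOn ℝ (ball 0 R₀) F)
    (hFdiff : ContDiffOn ℝ 1 F (ball 0 R₀)) (hFnn : ∀ x ∈ ball 0 R₀, 0 ≤ F x) (hF0 : F 0 = 0)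
    (hr : 0 < r) (h2r : 2 * r < R₀) : deltaOneFn m F r ≤ 2 * deltaFn m F (2 * r) := by
  have h2r_ball : closedBall (0 : EuclideanSpace ℝ (Fin m)) (2 * r) ⊆ ball 0 R₀ :=
    closedBall_subset_ball h2r
  have hδ : 0 ≤ deltaFn m F (2 * r) := deltaFn_nonneg fun x hx => hFnn x (h2r_ball hx)
  refine Real.sSup_le ?_ (by positivity)
  rintro _ ⟨x, hx, rfl⟩
  have hball : closedBall x r ⊆ closedBall 0 (2 * r) := by
    refine closedBall_subset_closedBall' ?_
    rw [dist_zero_right, two_mul]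
    exact add_le_add_right (mem_closedBall_zero_iff.1 hx) r
  have hxR : x ∈ ball 0 R₀ := h2r_ball (closedBall_subset_closedBall (by linarith) hx)
  obtain ⟨y, hy, hFy⟩ := hFconv.exists_mem_closedBall_add_mul_norm_gradient_le hr.le
    (hball.trans h2r_ball)
    ((hFdiff.differentiableOn one_ne_zero).differentiableAt (isOpen_ball.mem_nhds hxR))
  have hy2r : F y ≤ deltaFn m F (2 * r) * (2 * r) :=
    (apply_le_deltaFn_mul_norm hFdiff hF0 h2r (hball hy)).trans
      (mul_le_mul_of_nonneg_left (mem_closedBall_zero_iff.1 (hball hy)) hδ)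
  have hFx := hFnn x hxR
  have hmul : r * ‖gradient F x‖ ≤ r * (2 * deltaFn m F (2 * r)) := by linarith
  exact le_of_mul_le_mul_left hmul hr

end Delta

theorem delta_tendsto_zero_iff_general
    (n : ℕ) (R₀ : ℝ) (hR₀ : 0 < R₀)
    (F : EuclideanSpace ℝ (Fin (n - 1)) → ℝ)
    (hFconv : ConvexOn ℝ (ball (0 : EuclideanSpace ℝ (Fin (n - 1))) R₀) F)
    (hFdiff : ContDiffOn ℝ 1 F (ball (0 : EuclideanSpace ℝ (Fin (n - 1))) R₀))
    (hFnn : ∀ x' ∈ ball (0 : EuclideanSpace ℝ (Fin (n - 1))) R₀, 0 ≤ F x')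
    (hF0 : F 0 = 0) :
    Tendsto (deltaOneFn (n - 1) F) (𝓝[>] (0 : ℝ)) (𝓝 0) ↔
      Tendsto (deltaFn (n - 1) F) (𝓝[>] (0 : ℝ)) (𝓝 0) := by
  constructor
  · intro h
    have hsmall : ∀ᶠ r in 𝓝[>] (0 : ℝ), r < R₀ := nhdsWithin_le_nhds (gt_mem_nhds hR₀)
    refine tendsto_of_tendsto_of_tendsto_of_le_of_le' tendsto_const_nhds h ?_ ?_
    · filter_upwards [hsmall] with r hr
      exact deltaFn_nonneg fun x hx => hFnn x (closedBall_subset_ball hr hx)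
    · filter_upwards [hsmall] with r hr using deltaFn_le_deltaOneFn hFdiff hF0 hr
  · intro h
    have h2 : Tendsto (fun r => 2 * deltaFn (n - 1) F (2 * r)) (𝓝[>] 0) (𝓝 0) := by
      simpa using (h.comp (tendsto_iff_comap.2 (comap_mulLeft_nhdsGT_zero two_pos).ge)).const_mul 2
    have hsmall : ∀ᶠ r in 𝓝[>] (0 : ℝ), r ∈ Ioo 0 (R₀ / 2) :=
      Ioo_mem_nhdsGT (half_pos hR₀)
    refine tendsto_of_tendsto_of_tendsto_of_le_of_le' tendsto_const_nhds h2
      (Eventually.of_forall fun _ => deltaOneFn_nonneg) ?_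
    filter_upwards [hsmall] with r ⟨hr0, hr⟩
    exact deltaOneFn_le_two_mul_deltaFn hFconv hFdiff hFnn hF0 hr0 (by linarith)

theorem delta_tendsto_zero_iff
    (n : ℕ) (hn : 2 ≤ n) (R₀ : ℝ) (hR₀ : 0 < R₀)
    (F : EuclideanSpace ℝ (Fin (n - 1)) → ℝ)
    (hFconv : ConvexOn ℝ (ball (0 : EuclideanSpace ℝ (Fin (n - 1))) R₀) F)
    (hFdiff : ContDiffOn ℝ 1 F (ball (0 : EuclideanSpace ℝ (Fin (n - 1))) R₀))
    (hFnn : ∀ x' ∈ ball (0 : EuclideanSpace ℝ (Fin (n - 1))) R₀, 0 ≤ F x')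
    (hF0 : F 0 = 0) :
    Tendsto (deltaOneFn (n - 1) F) (𝓝[>] (0 : ℝ)) (𝓝 0) ↔
      Tendsto (deltaFn (n - 1) F) (𝓝[>] (0 : ℝ)) (𝓝 0) :=
  delta_tendsto_zero_iff_general n R₀ hR₀ F hFconv hFdiff hFnn hF0
end
end

section
/- Let σ : [0,1] → ℝ be a nonnegative increasing function with σ(0) = 0 and σ(1) = 1 such that ∫₀¹ σ(t)/t dt < ∞. Define σ̃(t) = t · sup_{τ ∈ [t,1]} σ(τ)/τ for t ∈ (0,1] and σ̃(0) = 0. Then σ̃ belongs to the class D₁; in particular σ̃ is nondecreasing with σ̃(1) = 1, the function t ↦ σ̃(t)/t is nonincreasing on (0,1], ∫₀¹ σ̃(t)/t dt < ∞, and moreover σ(t) ≤ σ̃(t) for all t ∈ (0,1]. -/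
/-!
Write `S t = sup_{τ ∈ [t,1]} σ τ / τ`, so that `σ̃ t = t * S t`. Shrinking the range of the
supremum makes `S` antitone. For `a ≤ b`, every `τ ∈ [a, b]` has
`a * σ τ / τ ≤ σ τ ≤ σ b ≤ b * S b`, and every `τ ≥ b` has `a * σ τ / τ ≤ a * S b`;
hence `a * S a ≤ b * S b`.

For the Dini condition, extend `σ` by `σ 1` beyond `1`. Monotonicity gives
`σ τ / τ ≤ 4 ∫_τ^{2τ} σ u / u² du`, hence `S t ≤ 4 ∫_t^2 σ u / u² du`, and integrating in `t`
and exchanging the order of integration yields `∫₀¹ S ≤ 4 ∫₀² σ u / u du < ∞`.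
-/

noncomputable section
open Set Filter Topology
open scoped ENNReal

/-- The class `D₁`. -/
structure IsD1 (σ : ℝ → ℝ) : Prop where
  nonneg : ∀ t ∈ Set.Icc (0 : ℝ) 1, 0 ≤ σ t
  mono : MonotoneOn σ (Set.Icc (0 : ℝ) 1)
  map_zero : σ 0 = 0
  map_one : σ 1 = 1
  slope_anti : AntitoneOn (fun t => σ t / t) (Set.Ioc (0 : ℝ) 1)
  dini : ∫⁻ t in Set.Ioo (0 : ℝ) 1, ENNReal.ofReal (σ t / t) < ⊤

open MeasureTheory

theorem monotoneOn_Icc_of_monotoneOn_Ioc {α β : Type*} [LinearOrder α] [Preorder β]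
    {f : α → β} {a b : α} (h : MonotoneOn f (Ioc a b))
    (ha : ∀ t ∈ Ioc a b, f a ≤ f t) : MonotoneOn f (Icc a b) := by
  intro x hx y hy hxy
  rcases hx.1.eq_or_lt with rfl | hax
  · rcases hy.1.eq_or_lt with rfl | hay
    · exact le_rfl
    · exact ha y ⟨hay, hy.2⟩
  · exact h ⟨hax, hx.2⟩ ⟨hax.trans_le hxy, hy.2⟩ hxy

theorem ENNReal.ofReal_csSup_le {s : Set ℝ} (hs : s.Nonempty) {c : ℝ≥0∞}
    (h : ∀ x ∈ s, ENNReal.ofReal x ≤ c) : ENNReal.ofReal (sSup s) ≤ c := by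
  rcases eq_or_ne c ⊤ with rfl | hc
  · exact le_top
  · rw [ENNReal.ofReal_le_iff_le_toReal hc]
    exact csSup_le hs fun x hx => (ENNReal.ofReal_le_iff_le_toReal hc).1 (h x hx)

theorem lintegral_Ioc_lintegral_Ioc {φ : ℝ → ℝ≥0∞} (hφ : Measurable φ) (a c : ℝ) :
    ∫⁻ t in Ioc a c, ∫⁻ u in Ioc t c, φ u = ∫⁻ u in Ioc a c, φ u * ENNReal.ofReal (u - a) := by
  have hinner : ∀ t ∈ Ioc a c,
      ∫⁻ u in Ioc t c, φ u = ∫⁻ u in Ioc a c, (Ioi t).indicator φ u := by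
    intro t ht
    rw [lintegral_indicator measurableSet_Ioi, Measure.restrict_restrict measurableSet_Ioi,
      inter_comm, Ioc_inter_Ioi, sup_eq_right.2 ht.1.le]
  have hjoint : Measurable (Function.uncurry fun t u => (Ioi t).indicator φ u) := by
    have : (Function.uncurry fun t u => (Ioi t).indicator φ u)
        = {p : ℝ × ℝ | p.1 < p.2}.indicator (φ ∘ Prod.snd) := by
      ext ⟨t, u⟩
      simp [indicator_apply]
    rw [this]
    exact (hφ.comp measurable_snd).indicator (measurableSet_lt measurable_fst measurable_snd)
  rw [setLIntegral_congr_fun measurableSet_Ioc hinner,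
    lintegral_lintegral_swap hjoint.aemeasurable]
  refine setLIntegral_congr_fun measurableSet_Ioc fun u hu => ?_
  have hswap : ∀ t, (Ioi t).indicator φ u = (Iio u).indicator (fun _ => φ u) t := fun t => by
    simp [indicator_apply]
  have hIoo : Iio u ∩ Ioc a c = Ioo a u := by
    ext t
    simp only [mem_inter_iff, mem_Iio, mem_Ioc, mem_Ioo]
    constructor
    · rintro ⟨htu, hat, -⟩
      exact ⟨hat, htu⟩
    · rintro ⟨hat, htu⟩
      exact ⟨htu, hat, htu.le.trans hu.2⟩
  simp_rw [hswap]
  rw [lintegral_indicator measurableSet_Iio, Measure.restrict_restrict measurableSet_Iio,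
    setLIntegral_const, hIoo, Real.volume_Ioo]

theorem ofReal_div_le_four_mul_lintegral {g : ℝ → ℝ} (hg : Monotone g) {τ : ℝ} (hτ : 0 < τ)
    (hgτ : 0 ≤ g τ) :
    ENNReal.ofReal (g τ / τ) ≤ 4 * ∫⁻ u in Ioc τ (2 * τ), ENNReal.ofReal (g u / u ^ 2) := by
  have hlower : ∀ u ∈ Ioc τ (2 * τ), ENNReal.ofReal (g τ / (4 * τ ^ 2))
      ≤ ENNReal.ofReal (g u / u ^ 2) := by
    intro u hu
    have hu0 : 0 < u := hτ.trans hu.1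
    apply ENNReal.ofReal_le_ofReal
    calc g τ / (4 * τ ^ 2) ≤ g τ / u ^ 2 :=
          div_le_div_of_nonneg_left hgτ (by positivity) (by nlinarith [hu.1, hu.2])
      _ ≤ g u / u ^ 2 := by gcongr; exact hg hu.1.le
  calc ENNReal.ofReal (g τ / τ) = 4 * (ENNReal.ofReal (g τ / (4 * τ ^ 2)) * ENNReal.ofReal τ) := by
        rw [← ENNReal.ofReal_mul' hτ.le, ← ENNReal.ofReal_ofNat 4,
          ← ENNReal.ofReal_mul (by norm_num)]
        congr 1
        field_simp
    _ = 4 * ∫⁻ _ in Ioc τ (2 * τ), ENNReal.ofReal (g τ / (4 * τ ^ 2)) := by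
        rw [setLIntegral_const, Real.volume_Ioc, two_mul, add_sub_cancel_right]
    _ ≤ 4 * ∫⁻ u in Ioc τ (2 * τ), ENNReal.ofReal (g u / u ^ 2) := by
        gcongr 4 * ?_
        exact setLIntegral_mono' measurableSet_Ioc hlower

/-- The paper's `σ̃(t) / t`. -/
def slopeSup (σ : ℝ → ℝ) (t : ℝ) : ℝ :=
  sSup ((fun τ => σ τ / τ) '' Icc t 1)

theorem slopeSup_one (σ : ℝ → ℝ) : slopeSup σ 1 = σ 1 := by
  simp [slopeSup]

section slopeSup

variable {σ : ℝ → ℝ} (hnn : ∀ t ∈ Icc (0 : ℝ) 1, 0 ≤ σ t) (hmono : MonotoneOn σ (Icc 0 1))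
  {t : ℝ}
include hnn hmono

theorem bddAbove_slope_image (ht : 0 < t) : BddAbove ((fun τ => σ τ / τ) '' Icc t 1) := by
  refine ⟨σ 1 / t, ?_⟩
  rintro _ ⟨τ, hτ, rfl⟩
  have hτ0 : 0 < τ := ht.trans_le hτ.1
  have hτ' : τ ∈ Icc (0 : ℝ) 1 := ⟨hτ0.le, hτ.2⟩
  calc σ τ / τ ≤ σ 1 / τ := by gcongr; exact hmono hτ' ⟨zero_le_one, le_rfl⟩ hτ.2
    _ ≤ σ 1 / t := div_le_div_of_nonneg_left (hnn 1 ⟨zero_le_one, le_rfl⟩) ht hτ.1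

theorem le_slopeSup (ht : 0 < t) {τ : ℝ} (hτ : τ ∈ Icc t 1) : σ τ / τ ≤ slopeSup σ t :=
  le_csSup (bddAbove_slope_image hnn hmono ht) (mem_image_of_mem _ hτ)

theorem le_mul_slopeSup (ht : t ∈ Ioc 0 1) : σ t ≤ t * slopeSup σ t := by
  have := le_slopeSup hnn hmono ht.1 ⟨le_rfl, ht.2⟩
  rwa [div_le_iff₀' ht.1] at this

theorem slopeSup_nonneg (ht : t ∈ Ioc 0 1) : 0 ≤ slopeSup σ t := by
  have := le_slopeSup hnn hmono ht.1 ⟨ht.2, le_rfl⟩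
  exact (div_nonneg (hnn 1 ⟨zero_le_one, le_rfl⟩) zero_le_one).trans this

theorem slopeSup_antitoneOn : AntitoneOn (slopeSup σ) (Ioc 0 1) := fun _ ha _ hb hab =>
  csSup_le_csSup (bddAbove_slope_image hnn hmono ha.1) ((nonempty_Icc.2 hb.2).image _)
    (image_mono (Icc_subset_Icc_left hab))

theorem monotoneOn_mul_slopeSup : MonotoneOn (fun t => t * slopeSup σ t) (Ioc 0 1) := by
  intro a ha b hb hab
  have hb0 : 0 < b := ha.1.trans_le hab
  suffices slopeSup σ a ≤ b * slopeSup σ b / a by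
    simpa only [le_div_iff₀' ha.1] using this
  refine csSup_le ((nonempty_Icc.2 ha.2).image _) ?_
  rintro _ ⟨τ, hτ, rfl⟩
  have hτ0 : 0 < τ := ha.1.trans_le hτ.1
  rw [le_div_iff₀' ha.1]
  rcases le_total τ b with hτb | hbτ
  · calc a * (σ τ / τ) ≤ σ τ := by
          rw [mul_div_assoc', div_le_iff₀ hτ0, mul_comm (σ τ) τ]
          exact mul_le_mul_of_nonneg_right hτ.1 (hnn τ ⟨hτ0.le, hτ.2⟩)
      _ ≤ σ b := hmono ⟨hτ0.le, hτ.2⟩ ⟨hb0.le, hb.2⟩ hτb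
      _ ≤ b * slopeSup σ b := le_mul_slopeSup hnn hmono hb
  · exact mul_le_mul hab (le_slopeSup hnn hmono hb0 ⟨hbτ, hτ.2⟩)
      (div_nonneg (hnn τ ⟨hτ0.le, hτ.2⟩) hτ0.le) hb0.le

end slopeSup

theorem lintegral_Ioc_zero_two_div_lt_top {g : ℝ → ℝ} (hg : Monotone g)
    (h : ∫⁻ u in Ioo 0 1, ENNReal.ofReal (g u / u) < ⊤) :
    ∫⁻ u in Ioc 0 2, ENNReal.ofReal (g u / u) < ⊤ := by
  have hbound : ∀ u ∈ Icc (1 : ℝ) 2, ENNReal.ofReal (g u / u) ≤ ENNReal.ofReal (g 2) := by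
    intro u hu
    rcases le_total 0 (g u) with hgu | hgu
    · exact ENNReal.ofReal_le_ofReal ((div_le_self hgu hu.1).trans (hg hu.2))
    · rw [ENNReal.ofReal_of_nonpos (div_nonpos_of_nonpos_of_nonneg hgu (by linarith [hu.1]))]
      exact bot_le
  have hhigh : ∫⁻ u in Icc 1 2, ENNReal.ofReal (g u / u) < ⊤ :=
    calc ∫⁻ u in Icc 1 2, ENNReal.ofReal (g u / u)
        ≤ ∫⁻ _ in Icc (1 : ℝ) 2, ENNReal.ofReal (g 2) := setLIntegral_mono' measurableSet_Icc hbound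
      _ < ⊤ := by
          rw [setLIntegral_const, Real.volume_Icc]
          exact ENNReal.mul_lt_top ENNReal.ofReal_lt_top ENNReal.ofReal_lt_top
  have hsplit : Ioc (0 : ℝ) 2 ⊆ Ioo 0 1 ∪ Icc 1 2 := fun u hu =>
    (lt_or_ge u 1).imp (fun h => ⟨hu.1, h⟩) (fun h => ⟨h, hu.2⟩)
  calc ∫⁻ u in Ioc 0 2, ENNReal.ofReal (g u / u)
      ≤ ∫⁻ u in Ioo 0 1 ∪ Icc 1 2, ENNReal.ofReal (g u / u) := lintegral_mono_set hsplit
    _ ≤ (∫⁻ u in Ioo 0 1, ENNReal.ofReal (g u / u)) + ∫⁻ u in Icc 1 2, ENNReal.ofReal (g u / u) :=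
        lintegral_union_le _ _ _
    _ < ⊤ := ENNReal.add_lt_top.2 ⟨h, hhigh⟩

section dini

variable {σ : ℝ → ℝ} (hnn : ∀ t ∈ Icc (0 : ℝ) 1, 0 ≤ σ t)
include hnn

theorem ofReal_slopeSup_le_lintegral {g : ℝ → ℝ} (hg : Monotone g) (hσg : EqOn σ g (Icc 0 1))
    {t : ℝ} (ht : t ∈ Ioc 0 1) :
    ENNReal.ofReal (slopeSup σ t) ≤ 4 * ∫⁻ u in Ioc t 2, ENNReal.ofReal (g u / u ^ 2) := by
  refine ENNReal.ofReal_csSup_le ((nonempty_Icc.2 ht.2).image _) ?_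
  rintro _ ⟨τ, hτ, rfl⟩
  have hτ0 : 0 < τ := ht.1.trans_le hτ.1
  have hτ' : τ ∈ Icc (0 : ℝ) 1 := ⟨hτ0.le, hτ.2⟩
  show ENNReal.ofReal (σ τ / τ) ≤ _
  rw [hσg hτ']
  calc ENNReal.ofReal (g τ / τ)
      ≤ 4 * ∫⁻ u in Ioc τ (2 * τ), ENNReal.ofReal (g u / u ^ 2) :=
        ofReal_div_le_four_mul_lintegral hg hτ0 (hσg hτ' ▸ hnn τ hτ')
    _ ≤ 4 * ∫⁻ u in Ioc t 2, ENNReal.ofReal (g u / u ^ 2) := by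
        gcongr 4 * ?_
        exact lintegral_mono_set (Ioc_subset_Ioc hτ.1 (by linarith [hτ.2]))

theorem lintegral_slopeSup_le {g : ℝ → ℝ} (hg : Monotone g) (hσg : EqOn σ g (Icc 0 1)) :
    ∫⁻ t in Ioc 0 1, ENNReal.ofReal (slopeSup σ t)
      ≤ 4 * ∫⁻ u in Ioc 0 2, ENNReal.ofReal (g u / u) := by
  have hmeas : Measurable fun u => ENNReal.ofReal (g u / u ^ 2) :=
    ENNReal.measurable_ofReal.comp (hg.measurable.div (measurable_id.pow_const 2))
  have hweight : ∀ u ∈ Ioc (0 : ℝ) 2,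
      ENNReal.ofReal (g u / u ^ 2) * ENNReal.ofReal (u - 0) = ENNReal.ofReal (g u / u) := by
    intro u hu
    rw [sub_zero, ← ENNReal.ofReal_mul' hu.1.le]
    congr 1
    field_simp [hu.1.ne']
  calc ∫⁻ t in Ioc 0 1, ENNReal.ofReal (slopeSup σ t)
      ≤ ∫⁻ t in Ioc 0 1, 4 * ∫⁻ u in Ioc t 2, ENNReal.ofReal (g u / u ^ 2) :=
        setLIntegral_mono' measurableSet_Ioc fun t ht =>
          ofReal_slopeSup_le_lintegral hnn hg hσg ht
    _ ≤ 4 * ∫⁻ t in Ioc 0 2, ∫⁻ u in Ioc t 2, ENNReal.ofReal (g u / u ^ 2) := by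
        rw [lintegral_const_mul' _ _ (by norm_num)]
        gcongr 4 * ?_
        exact lintegral_mono_set (Ioc_subset_Ioc_right one_le_two)
    _ = 4 * ∫⁻ u in Ioc 0 2, ENNReal.ofReal (g u / u) := by
        rw [lintegral_Ioc_lintegral_Ioc hmeas, setLIntegral_congr_fun measurableSet_Ioc hweight]

theorem lintegral_slopeSup_lt_top (hmono : MonotoneOn σ (Icc 0 1))
    (hdini : ∫⁻ t in Ioo (0 : ℝ) 1, ENNReal.ofReal (σ t / t) < ⊤) :
    ∫⁻ t in Ioo 0 1, ENNReal.ofReal (slopeSup σ t) < ⊤ := by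
  set g := IccExtend zero_le_one fun x : Icc (0 : ℝ) 1 => σ x
  have hg : Monotone g := (monotoneOn_iff_monotone.1 hmono).IccExtend _
  have hσg : EqOn σ g (Icc 0 1) := fun u hu =>
    (IccExtend_of_mem zero_le_one (fun x : Icc (0 : ℝ) 1 => σ x) hu).symm
  have hdini_g : ∫⁻ u in Ioo 0 1, ENNReal.ofReal (g u / u) < ⊤ := by
    rwa [setLIntegral_congr_fun measurableSet_Ioo fun u (hu : u ∈ Ioo 0 1) =>
      congrArg (fun y => ENNReal.ofReal (y / u)) (hσg (Ioo_subset_Icc_self hu)).symm]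
  calc ∫⁻ t in Ioo 0 1, ENNReal.ofReal (slopeSup σ t)
      ≤ ∫⁻ t in Ioc 0 1, ENNReal.ofReal (slopeSup σ t) := lintegral_mono_set Ioo_subset_Ioc_self
    _ ≤ 4 * ∫⁻ u in Ioc 0 2, ENNReal.ofReal (g u / u) := lintegral_slopeSup_le hnn hg hσg
    _ < ⊤ := ENNReal.mul_lt_top (by norm_num) (lintegral_Ioc_zero_two_div_lt_top hg hdini_g)

end dini

theorem regularization_mem_D1_general
    (σ : ℝ → ℝ)
    (hnn : ∀ t ∈ Set.Icc (0 : ℝ) 1, 0 ≤ σ t)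
    (hmono : MonotoneOn σ (Set.Icc (0 : ℝ) 1))
    (h1 : σ 1 = 1)
    (hdini : ∫⁻ t in Set.Ioo (0 : ℝ) 1, ENNReal.ofReal (σ t / t) < ⊤)
    (σt : ℝ → ℝ)
    (hσt0 : σt 0 = 0)
    (hσt : ∀ t ∈ Set.Ioc (0 : ℝ) 1,
      σt t = t * sSup ((fun τ => σ τ / τ) '' Set.Icc t 1)) :
    IsD1 σt ∧ ∀ t ∈ Set.Ioc (0 : ℝ) 1, σ t ≤ σt t := by
  have hσt_eq : EqOn (fun t => t * slopeSup σ t) σt (Ioc 0 1) := fun t ht => (hσt t ht).symm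
  have hslope_eq : EqOn (slopeSup σ) (fun t => σt t / t) (Ioc 0 1) := fun t ht => by
    simp only [← hσt_eq ht, mul_div_cancel_left₀ _ ht.1.ne']
  have hσt_nonneg : ∀ t ∈ Icc (0 : ℝ) 1, 0 ≤ σt t := by
    rintro t ⟨ht0, ht1⟩
    rcases ht0.eq_or_lt with rfl | ht0
    · exact hσt0.ge
    · rw [← hσt_eq ⟨ht0, ht1⟩]
      exact mul_nonneg ht0.le (slopeSup_nonneg hnn hmono ⟨ht0, ht1⟩)
  refine ⟨⟨hσt_nonneg, ?_, hσt0, ?_, (slopeSup_antitoneOn hnn hmono).congr hslope_eq, ?_⟩,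
    fun t ht => hσt_eq ht ▸ le_mul_slopeSup hnn hmono ht⟩
  · exact monotoneOn_Icc_of_monotoneOn_Ioc ((monotoneOn_mul_slopeSup hnn hmono).congr hσt_eq)
      fun t ht => hσt0.symm ▸ hσt_nonneg t (Ioc_subset_Icc_self ht)
  · rw [← hσt_eq ⟨one_pos, le_rfl⟩]
    simp only [slopeSup_one, one_mul, h1]
  · rw [← setLIntegral_congr_fun measurableSet_Ioo fun t ht => congrArg ENNReal.ofReal
      (hslope_eq (Ioo_subset_Ioc_self ht))]
    exact lintegral_slopeSup_lt_top hnn hmono hdini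

theorem regularization_mem_D1
    (σ : ℝ → ℝ)
    (hnn : ∀ t ∈ Set.Icc (0 : ℝ) 1, 0 ≤ σ t)
    (hmono : MonotoneOn σ (Set.Icc (0 : ℝ) 1))
    (h0 : σ 0 = 0) (h1 : σ 1 = 1)
    (hdini : ∫⁻ t in Set.Ioo (0 : ℝ) 1, ENNReal.ofReal (σ t / t) < ⊤)
    (σt : ℝ → ℝ)
    (hσt0 : σt 0 = 0)
    (hσt : ∀ t ∈ Set.Ioc (0 : ℝ) 1,
      σt t = t * sSup ((fun τ => σ τ / τ) '' Set.Icc t 1)) :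
    IsD1 σt ∧ ∀ t ∈ Set.Ioc (0 : ℝ) 1, σ t ≤ σt t :=
  regularization_mem_D1_general σ hnn hmono h1 hdini σt hσt0 hσt
end
end

section
/- Let n ≥ 2, ν ∈ (0,1], γ = ν/√(n−1), ρ > 0 and k > 0, and define ψ(y) = k [ (1 − y_n/(γρ))² − |y'|²/ρ² ] for y = (y', y_n) ∈ ℝⁿ. Then there exists a constant N₁ > 0, depending only on n and ν, such that for every y ∈ Π_ρ = {y : |y_i| < ρ for i = 1,…,n−1, 0 < y_n < γρ}, every real symmetric n×n matrix A with ν I ≤ A ≤ ν^{-1} I, and every vector β ∈ ℝⁿ: − Σ_{i,j} A_{ij} ∂_i∂_j ψ(y) + β · ∇ψ(y) ≤ N₁ |β| k / ρ. In particular, − Σ_{i,j} A_{ij} ∂_i∂_j ψ(y) ≤ 0. -/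
/-!
`ψ` is a diagonal quadratic `Σⱼ aⱼ (yⱼ - cⱼ)²`, so its Hessian is the constant matrix
`diag(-2k/ρ², …, -2k/ρ², 2k/(γρ)²)`. Since the diagonal entries of `A` lie in `[ν, ν⁻¹]`,
`-Σ Aᵢⱼ ∂ᵢ∂ⱼψ ≤ (2k/ρ²)(n - 1)/ν - (2k/(γρ)²) ν`, which vanishes exactly because
`γ² = ν²/(n - 1)`. In the box every `|∂ᵢψ|` is at most `(2k/ρ)(1/γ + 1)`, which bounds `β · ∇ψ`.
-/

noncomputable section
open Set Filter Topology

/-- The index of the last coordinate in `Fin n`. -/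
def lastIdx (n : ℕ) (hn : 0 < n) : Fin n := ⟨n - 1, Nat.sub_lt hn one_pos⟩

/-- First partial derivative `Dᵢ u`. -/
def D1 (n : ℕ) (i : Fin n) (u : EuclideanSpace ℝ (Fin n) → ℝ)
    (x : EuclideanSpace ℝ (Fin n)) : ℝ :=
  fderiv ℝ u x (EuclideanSpace.single i 1)

/-- Second partial derivative `Dᵢ Dⱼ u`. -/
def D2 (n : ℕ) (i j : Fin n) (u : EuclideanSpace ℝ (Fin n) → ℝ)
    (x : EuclideanSpace ℝ (Fin n)) : ℝ :=
  fderiv ℝ (fun y => fderiv ℝ u y (EuclideanSpace.single j 1)) x (EuclideanSpace.single i 1)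

/-- The box `Π_ρ = {y : |yᵢ| < ρ (i = 1,…,n-1), 0 < yₙ < γρ}`. -/
def boxPi (n : ℕ) (hn : 0 < n) (γ ρ : ℝ) : Set (EuclideanSpace ℝ (Fin n)) :=
  {y | (∀ i : Fin n, (i : ℕ) < n - 1 → |y i| < ρ) ∧
    0 < y (lastIdx n hn) ∧ y (lastIdx n hn) < γ * ρ}

/-- The barrier `ψ(y) = k[(1 - yₙ/(γρ))² - |y'|²/ρ²]`. -/
def psiBar (n : ℕ) (hn : 0 < n) (γ ρ k : ℝ) (y : EuclideanSpace ℝ (Fin n)) : ℝ :=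
  k * ((1 - y (lastIdx n hn) / (γ * ρ)) ^ 2 -
    (∑ i ∈ Finset.univ.filter fun i : Fin n => (i : ℕ) < n - 1, (y i) ^ 2) / ρ ^ 2)

open Finset

section EuclideanSpace

variable {ι : Type*} [Fintype ι]

lemma sum_mul_le_card_mul_norm (β : EuclideanSpace ℝ ι) {g : ι → ℝ} {M : ℝ}
    (hg : ∀ i, |g i| ≤ M) : ∑ i, β i * g i ≤ Fintype.card ι * M * ‖β‖ := by
  calc ∑ i, β i * g i ≤ ∑ _i : ι, M * ‖β‖ := by
        refine sum_le_sum fun i _ => ?_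
        calc β i * g i ≤ |g i| * |β i| := by rw [mul_comm, ← abs_mul]; exact le_abs_self _
          _ ≤ M * ‖β‖ := by
            gcongr
            · exact (abs_nonneg _).trans (hg i)
            · exact hg i
            · simpa using PiLp.norm_apply_le β i
    _ = Fintype.card ι * M * ‖β‖ := by simp [mul_assoc]

lemma hasFDerivAt_sum_mul_sub_sq (a c : ι → ℝ) (x : EuclideanSpace ℝ ι) :
    HasFDerivAt (fun y : EuclideanSpace ℝ ι => ∑ j, a j * (y j - c j) ^ 2)
      (∑ j, (2 * a j * (x j - c j)) • EuclideanSpace.proj (𝕜 := ℝ) (ι := ι) j) x := by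
  refine HasFDerivAt.fun_sum fun j _ => ?_
  refine ((((EuclideanSpace.proj (𝕜 := ℝ) (ι := ι) j).hasFDerivAt).sub_const (c j)).pow 2
    |>.const_mul (a j)).congr_fderiv ?_
  ext; simp; ring

variable [DecidableEq ι] (A : ι → ι → ℝ)

lemma quadForm_single (i : ι) :
    ∑ p, ∑ q, A p q * EuclideanSpace.single i (1 : ℝ) p * EuclideanSpace.single i (1 : ℝ) q =
      A i i := by
  simp [PiLp.single_apply]

lemma le_diag_of_le_quadForm {c : ℝ}
    (h : ∀ ξ : EuclideanSpace ℝ ι, c * ‖ξ‖ ^ 2 ≤ ∑ p, ∑ q, A p q * ξ p * ξ q) (i : ι) :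
    c ≤ A i i := by
  simpa [quadForm_single] using h (EuclideanSpace.single i 1)

lemma diag_le_of_quadForm_le {C : ℝ}
    (h : ∀ ξ : EuclideanSpace ℝ ι, ∑ p, ∑ q, A p q * ξ p * ξ q ≤ C * ‖ξ‖ ^ 2) (i : ι) :
    A i i ≤ C := by
  simpa [quadForm_single] using h (EuclideanSpace.single i 1)

end EuclideanSpace

section DiagonalQuadratic

variable {n : ℕ} (a c : Fin n → ℝ)

lemma D1_sum_mul_sub_sq (i : Fin n) (x : EuclideanSpace ℝ (Fin n)) :
    D1 n i (fun y => ∑ j, a j * (y j - c j) ^ 2) x = 2 * a i * (x i - c i) := by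
  simp [D1, (hasFDerivAt_sum_mul_sub_sq a c x).fderiv, PiLp.single_apply]

lemma D2_sum_mul_sub_sq (i j : Fin n) (x : EuclideanSpace ℝ (Fin n)) :
    D2 n i j (fun y => ∑ l, a l * (y l - c l) ^ 2) x = if i = j then 2 * a i else 0 := by
  have h : HasFDerivAt (fun y => D1 n j (fun y => ∑ l, a l * (y l - c l) ^ 2) y)
      ((2 * a j) • EuclideanSpace.proj (𝕜 := ℝ) (ι := Fin n) j) x := by
    simp_rw [D1_sum_mul_sub_sq]
    exact ((EuclideanSpace.proj (𝕜 := ℝ) (ι := Fin n) j).hasFDerivAt.sub_const _).const_mul _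
  change fderiv ℝ (fun y => D1 n j _ y) x _ = _
  rw [h.fderiv]
  split_ifs with hij <;> simp [hij]

end DiagonalQuadratic

section Barrier

variable {n : ℕ} (hn : 0 < n) (γ ρ k : ℝ)

def psiCoeff (j : Fin n) : ℝ := if j = lastIdx n hn then k / (γ * ρ) ^ 2 else -(k / ρ ^ 2)

def psiCenter (j : Fin n) : ℝ := if j = lastIdx n hn then γ * ρ else 0

lemma filter_lt_pred_eq_compl_lastIdx :
    univ.filter (fun i : Fin n => (i : ℕ) < n - 1) = {lastIdx n hn}ᶜ := by
  ext i
  simp only [Finset.mem_filter, Finset.mem_univ, true_and, Finset.mem_compl,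
    Finset.mem_singleton, lastIdx, Fin.ext_iff]
  omega

lemma card_compl_lastIdx : (({lastIdx n hn}ᶜ : Finset (Fin n)).card : ℝ) = n - 1 := by
  rw [Finset.card_compl, Finset.card_singleton, Fintype.card_fin, Nat.cast_pred hn]

lemma psiBar_eq_sum (hγ : γ ≠ 0) (hρ : ρ ≠ 0) :
    psiBar n hn γ ρ k = fun y => ∑ j, psiCoeff hn γ ρ k j * (y j - psiCenter hn γ ρ j) ^ 2 := by
  funext y
  have hcompl : ∑ j ∈ {lastIdx n hn}ᶜ, psiCoeff hn γ ρ k j * (y j - psiCenter hn γ ρ j) ^ 2 =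
      -(k / ρ ^ 2) * ∑ j ∈ {lastIdx n hn}ᶜ, y j ^ 2 := by
    rw [mul_sum]
    refine sum_congr rfl fun j hj => ?_
    rw [Finset.mem_compl, Finset.mem_singleton] at hj
    simp [psiCoeff, psiCenter, hj]
  rw [psiBar, filter_lt_pred_eq_compl_lastIdx hn, Fintype.sum_eq_add_sum_compl (lastIdx n hn),
    hcompl]
  simp only [psiCoeff, psiCenter, if_pos]
  field_simp
  ring

lemma sum_diag_mul_psiCoeff_nonneg {ν : ℝ} (hν : 0 < ν) (hγ : (n - 1) * γ ^ 2 = ν ^ 2)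
    (hρ : 0 < ρ) (hk : 0 ≤ k) (A : Fin n → Fin n → ℝ) (hA : ∀ i, ν ≤ A i i ∧ A i i ≤ ν⁻¹) :
    0 ≤ ∑ i, A i i * (2 * psiCoeff hn γ ρ k i) := by
  have hγ0 : γ ≠ 0 := by
    rintro rfl
    nlinarith
  have hcompl : ∑ i ∈ {lastIdx n hn}ᶜ, A i i * (2 * psiCoeff hn γ ρ k i) =
      -(2 * (k / ρ ^ 2) * ∑ i ∈ {lastIdx n hn}ᶜ, A i i) := by
    rw [mul_sum, ← sum_neg_distrib]
    refine sum_congr rfl fun i hi => ?_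
    rw [Finset.mem_compl, Finset.mem_singleton] at hi
    simp only [psiCoeff, if_neg hi]
    ring
  have htrace : ∑ i ∈ {lastIdx n hn}ᶜ, A i i ≤ (n - 1) * ν⁻¹ := by
    calc ∑ i ∈ {lastIdx n hn}ᶜ, A i i ≤ ({lastIdx n hn}ᶜ : Finset (Fin n)).card • ν⁻¹ :=
          sum_le_card_nsmul _ _ _ fun i _ => (hA i).2
      _ = (n - 1) * ν⁻¹ := by rw [nsmul_eq_mul, card_compl_lastIdx]
  have hkey : ν * (k / (γ * ρ) ^ 2) = (n - 1) * ν⁻¹ * (k / ρ ^ 2) := by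
    field_simp
    linear_combination (-k) * hγ
  rw [Fintype.sum_eq_add_sum_compl (lastIdx n hn), hcompl]
  simp only [psiCoeff, if_pos]
  have hlast := mul_le_mul_of_nonneg_right (hA (lastIdx n hn)).1
    (by positivity : 0 ≤ k / (γ * ρ) ^ 2)
  have hrest := mul_le_mul_of_nonneg_left htrace (by positivity : 0 ≤ k / ρ ^ 2)
  linarith

lemma abs_psiGrad_le {y : EuclideanSpace ℝ (Fin n)} (hy : y ∈ boxPi n hn γ ρ) (hρ : 0 < ρ)
    (hk : 0 ≤ k) (i : Fin n) :
    |2 * psiCoeff hn γ ρ k i * (y i - psiCenter hn γ ρ i)| ≤ 2 * k / ρ * (γ⁻¹ + 1) := by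
  obtain ⟨hy', hlast0, hlast⟩ := hy
  have hγ : 0 < γ := pos_of_mul_pos_left (hlast0.trans hlast) hρ.le
  by_cases hi : i = lastIdx n hn
  · subst hi
    simp only [psiCoeff, psiCenter, if_pos]
    calc |2 * (k / (γ * ρ) ^ 2) * (y (lastIdx n hn) - γ * ρ)|
        = 2 * (k / (γ * ρ) ^ 2) * (γ * ρ - y (lastIdx n hn)) := by
          rw [abs_mul, abs_of_nonneg (by positivity), abs_of_neg (by linarith)]
          ring
      _ ≤ 2 * (k / (γ * ρ) ^ 2) * (γ * ρ) := by gcongr; linarith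
      _ = 2 * k / ρ * γ⁻¹ := by field_simp
      _ ≤ 2 * k / ρ * (γ⁻¹ + 1) := by gcongr; linarith
  · have hi' : (i : ℕ) < n - 1 := by
      have := i.isLt
      simp only [lastIdx, Fin.ext_iff] at hi
      omega
    simp only [psiCoeff, psiCenter, if_neg hi, sub_zero]
    calc |2 * -(k / ρ ^ 2) * y i| = 2 * (k / ρ ^ 2) * |y i| := by
          rw [abs_mul, abs_mul, abs_neg, abs_of_nonneg (by positivity : 0 ≤ k / ρ ^ 2)]
          norm_num
      _ ≤ 2 * (k / ρ ^ 2) * ρ := by gcongr; exact (hy' i hi').le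
      _ = 2 * k / ρ * 1 := by field_simp
      _ ≤ 2 * k / ρ * (γ⁻¹ + 1) := by gcongr; linarith [inv_pos.mpr hγ]

end Barrier

theorem barrier_computation
    (n : ℕ) (hn : 2 ≤ n) (ν : ℝ) (hν : ν ∈ Set.Ioc (0 : ℝ) 1)
    (γ : ℝ) (hγ : γ = ν / Real.sqrt (n - 1)) :
    ∃ N₁ > (0 : ℝ), ∀ ρ > (0 : ℝ), ∀ k > (0 : ℝ),
      ∀ y ∈ boxPi n (by omega) γ ρ,
      ∀ A : Fin n → Fin n → ℝ, (∀ i j, A i j = A j i) →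
        (∀ ξ : EuclideanSpace ℝ (Fin n),
          ν * ‖ξ‖ ^ 2 ≤ ∑ i, ∑ j, A i j * ξ i * ξ j ∧
          ∑ i, ∑ j, A i j * ξ i * ξ j ≤ ν⁻¹ * ‖ξ‖ ^ 2) →
        ∀ β : EuclideanSpace ℝ (Fin n),
          ((-∑ i, ∑ j, A i j * D2 n i j (psiBar n (by omega) γ ρ k) y) +
              ∑ i, β i * D1 n i (psiBar n (by omega) γ ρ k) y
            ≤ N₁ * ‖β‖ * k / ρ) ∧
          (-∑ i, ∑ j, A i j * D2 n i j (psiBar n (by omega) γ ρ k) y) ≤ 0 := by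
  have hν0 : 0 < ν := hν.1
  have hn1 : (1 : ℝ) ≤ n - 1 := by
    have : (2 : ℝ) ≤ n := by exact_mod_cast hn
    linarith
  have hγ0 : 0 < γ := hγ ▸ div_pos hν0 (Real.sqrt_pos.mpr (by linarith))
  have hγsq : (n - 1) * γ ^ 2 = ν ^ 2 := by
    rw [hγ, div_pow, Real.sq_sqrt (by linarith)]
    field_simp
  refine ⟨n * (2 * (γ⁻¹ + 1)), by positivity, fun ρ hρ k hk y hy A _ hA β => ?_⟩
  rw [psiBar_eq_sum _ γ ρ k hγ0.ne' hρ.ne']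
  simp only [D2_sum_mul_sub_sq, D1_sum_mul_sub_sq, mul_ite, mul_zero, Finset.sum_ite_eq,
    Finset.mem_univ, if_true]
  have hsecond := sum_diag_mul_psiCoeff_nonneg (by omega) γ ρ k hν0 hγsq hρ hk.le A fun i =>
    ⟨le_diag_of_le_quadForm A (fun ξ => (hA ξ).1) i, diag_le_of_quadForm_le A (fun ξ => (hA ξ).2) i⟩
  have hfirst := sum_mul_le_card_mul_norm β (abs_psiGrad_le (by omega) γ ρ k hy hρ hk.le)
  rw [Fintype.card_fin] at hfirst
  refine ⟨?_, by linarith⟩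
  calc _ ≤ (0 : ℝ) + n * (2 * k / ρ * (γ⁻¹ + 1)) * ‖β‖ := add_le_add (by linarith) hfirst
    _ = n * (2 * (γ⁻¹ + 1)) * ‖β‖ * k / ρ := by ring
end
end
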